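/- Let V be a vector space over F_2 and d ∈ GL(V) of order 3. A subspace W of V is invariant under d if and only if W ⊆ C_V(d) or [V,d] ⊆ W, provided [V,d] is 2-dimensional. -/

import Mathlib

/-!
Put `f = d - 1`. Since `(d² + d + 1) f = d³ - 1 = 0`, every vector `u ∈ [V,d]` satisfies
`d² u + d u + u = 0`; as `X² + X + 1` has no root in `𝔽₂`, `d` has no eigenvector in `[V,d]`.
So a nonzero `u ∈ W ∩ [V,d]` in a `d`-invariant `W` gives two independent vectors `u, d u` of
`W ∩ [V,d]`, whence `[V,d] ≤ W` by dimension. If instead `W ∩ [V,d] = 0`, then `f W ≤ W ∩ [V,d]`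
vanishes, i.e. `W ≤ C_V(d)`.
-/

open Module LinearMap

section

variable {R M : Type*} [Ring R] [AddCommGroup M] [Module R M]

theorem le_ker_of_disjoint_range {f : M →ₗ[R] M} {W : Submodule R M}
    (hfW : ∀ w ∈ W, f w ∈ W) (h : Disjoint W (range f)) : W ≤ ker f :=
  fun w hw => Submodule.disjoint_def.1 h _ (hfW w hw) (mem_range_self f w)

theorem apply_mem_of_sub_one_apply_mem {d : M →ₗ[R] M} {W : Submodule R M}
    (h : ∀ w ∈ W, (d - 1) w ∈ W) : ∀ w ∈ W, d w ∈ W := fun w hw => by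
  simpa using W.add_mem (h w hw) hw

end

section

variable {K V : Type*} [Field K] [AddCommGroup V] [Module K V]

theorem le_of_not_disjoint_of_finrank_eq_two {g : V →ₗ[K] V} {U W : Submodule K V}
    (hU2 : finrank K U = 2) (hgU : ∀ u ∈ U, g u ∈ U)
    (hU : ∀ u ∈ U, ∀ c : K, g u = c • u → u = 0)
    (hgW : ∀ w ∈ W, g w ∈ W) (hWU : ¬Disjoint W U) : U ≤ W := by
  obtain ⟨u, ⟨huW, huU⟩, hu0⟩ :=
    Submodule.exists_mem_ne_zero_of_ne_bot (disjoint_iff.not.1 hWU)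
  have : FiniteDimensional K U := Module.finite_of_finrank_eq_succ hU2
  have hli : LinearIndependent K ![u, g u] :=
    (LinearIndependent.pair_iff' hu0).2 fun c h => hu0 (hU u huU c h.symm)
  have hspan : Submodule.span K (Set.range ![u, g u]) = U := by
    refine Submodule.eq_of_le_of_finrank_eq ?_ (by rw [finrank_span_eq_card hli, hU2]; rfl)
    simp [Submodule.span_le, Set.insert_subset_iff, huU, hgU u huU]
  simp [← hspan, Submodule.span_le, Set.insert_subset_iff, huW, hgW u huW]

theorem eq_zero_of_mem_range_sub_one_of_apply_eq_smul {d : V →ₗ[K] V} (hd : d ^ 3 = 1)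
    (hK : ∀ c : K, c ^ 2 + c + 1 ≠ 0) {u : V} (hu : u ∈ range (d - 1)) {c : K}
    (hdu : d u = c • u) : u = 0 := by
  obtain ⟨v, rfl⟩ := hu
  have hcube : (d ^ 2 + d + 1 : V →ₗ[K] V) ((d - 1) v) = 0 := by
    rw [← Module.End.mul_apply, show (d ^ 2 + d + 1) * (d - 1) = d ^ 3 - 1 by noncomm_ring,
      hd, sub_self, LinearMap.zero_apply]
  have hd2 : (d ^ 2) ((d - 1) v) = c ^ 2 • (d - 1) v := by
    rw [pow_two, Module.End.mul_apply, hdu, map_smul, hdu, smul_smul, pow_two]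
  have hroot : (c ^ 2 + c + 1) • (d - 1) v = 0 := by
    rwa [add_smul, add_smul, one_smul, ← hd2, ← hdu]
  exact (smul_eq_zero.1 hroot).resolve_left (hK c)

theorem invariant_iff_le_ker_or_range_le {d : V →ₗ[K] V} (hd : d ^ 3 = 1)
    (hK : ∀ c : K, c ^ 2 + c + 1 ≠ 0) (h2 : finrank K (range (d - 1)) = 2)
    (W : Submodule K V) :
    (∀ w ∈ W, d w ∈ W) ↔ W ≤ ker (d - 1) ∨ range (d - 1) ≤ W := by
  constructor
  · intro hdW
    have hfW : ∀ w ∈ W, (d - 1) w ∈ W := fun w hw => W.sub_mem (hdW w hw) hw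
    by_cases hWU : Disjoint W (range (d - 1))
    · exact Or.inl (le_ker_of_disjoint_range hfW hWU)
    · refine Or.inr (le_of_not_disjoint_of_finrank_eq_two h2 ?_
        (fun u hu c => eq_zero_of_mem_range_sub_one_of_apply_eq_smul hd hK hu) hdW hWU)
      rintro _ ⟨v, rfl⟩
      exact ⟨d v, by simp⟩
  · rintro (hker | hrange)
    · exact apply_mem_of_sub_one_apply_mem fun w hw => by
        rw [mem_ker.1 (hker hw)]; exact W.zero_mem
    · exact apply_mem_of_sub_one_apply_mem fun w _ => hrange (mem_range_self _ w)

end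

theorem stmt_1_general (V : Type*) [AddCommGroup V] [Module (ZMod 2) V]
    (d : V ≃ₗ[ZMod 2] V) (hd3 : d ^ 3 = 1)
    (hdim : Module.rank (ZMod 2)
      (LinearMap.range ((d : V →ₗ[ZMod 2] V) - LinearMap.id)) = 2)
    (W : Submodule (ZMod 2) V) :
    (∀ v ∈ W, d v ∈ W) ↔
      W ≤ LinearMap.ker ((d : V →ₗ[ZMod 2] V) - LinearMap.id) ∨
      LinearMap.range ((d : V →ₗ[ZMod 2] V) - LinearMap.id) ≤ W := by
  have hd : (d : V →ₗ[ZMod 2] V) ^ 3 = 1 := by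
    rw [← LinearEquiv.automorphismGroup.toLinearMapMonoidHom_apply, ← map_pow, hd3, map_one]
  rw [← Module.End.one_eq_id] at hdim ⊢
  exact invariant_iff_le_ker_or_range_le hd (by decide) (finrank_eq_of_rank_eq hdim) W

theorem stmt_1 (V : Type*) [AddCommGroup V] [Module (ZMod 2) V]
    (d : V ≃ₗ[ZMod 2] V) (hd3 : d ^ 3 = 1) (hd1 : d ≠ 1)
    (hdim : Module.rank (ZMod 2)
      (LinearMap.range ((d : V →ₗ[ZMod 2] V) - LinearMap.id)) = 2)
    (W : Submodule (ZMod 2) V) :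
    (∀ v ∈ W, d v ∈ W) ↔
      W ≤ LinearMap.ker ((d : V →ₗ[ZMod 2] V) - LinearMap.id) ∨
      LinearMap.range ((d : V →ₗ[ZMod 2] V) - LinearMap.id) ≤ W :=
  stmt_1_general V d hd3 hdim W
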